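/- Let (K, σ) be a 2-algebraically closed σ-field with fixed field F. Then (K, σ) is 3-algebraically closed if and only if K has exactly two σ-conjugacy classes (equivalently, every nonzero element of K is σ-conjugate to 1). Moreover, if (K, σ) is 3-algebraically closed, then (K, σ) is (1+|F|)-algebraically closed; in particular, if in addition F is infinite, then (K, σ) is ℵ_0-algebraically closed. -/

import Mathlib

open Polynomial

variable {K : Type*} [Field K]

/-- `skewN σ i a = σ^{i-1}(a)⋯σ(a)·a`, with `skewN σ 0 a = 1`. -/
def skewN (σ : K →+* K) : ℕ → K → K
  | 0, _ => 1
  | i + 1, a => σ (skewN σ i a) * a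

/-- Right evaluation of a skew polynomial `P = Σ aᵢ Tⁱ` at `a`: `P(a) = Σ aᵢ Nᵢ(a)`. -/
noncomputable def skewEval (σ : K →+* K) (P : Polynomial K) (a : K) : K :=
  ∑ i ∈ P.support, P.coeff i * skewN σ i a

/-- Multiplication in the skew polynomial ring `K[T;σ]` (with `T·a = σ(a)·T`),
using `Polynomial K` as the carrier of coefficient sequences. -/
noncomputable def skewMul (σ : K →+* K) (P Q : Polynomial K) : Polynomial K :=
  ∑ i ∈ P.support, ∑ j ∈ Q.support,
    Polynomial.C (P.coeff i * (⇑σ)^[i] (Q.coeff j)) * Polynomial.X ^ (i + j)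

universe u

/-- `(K, σ)` is `c`-algebraically closed: every skew polynomial of degree `> 1` with nonzero
constant term has at least `c` distinct right roots. -/
def CAlgClosed {K : Type u} [Field K] (σ : K →+* K) (c : Cardinal.{u}) : Prop :=
  ∀ P : Polynomial K, 1 < P.natDegree → P.coeff 0 ≠ 0 →
    c ≤ Cardinal.mk {x : K // skewEval σ P x = 0}

/-! If every nonzero element is σ-conjugate to `1`, write two distinct right roots of a skew
polynomial `P = Σ aᵢ Tⁱ` as `σ x₁ / x₁` and `σ x₂ / x₂`. The map `x ↦ Σ aᵢ σⁱ(x)` is linear over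
the fixed field `F` and `P(σ x / x) = (Σ aᵢ σⁱ(x)) / x`, so every nonzero `x` in the `F`-span of
`x₁, x₂` gives a root `σ x / x`. Since `σ x / x = σ y / y` exactly when `x / y ∈ F`, the roots
contain a copy of the projective line over `F`, which has `1 + |F|` points.
Conversely, a third right root `c` of the quadratic with right roots `1` and `a` forces `a` to be
σ-conjugate to `1`. -/

section

variable (σ : K →+* K)

theorem skewEval_eq_sum (P : K[X]) (a : K) :
    skewEval σ P a = P.sum fun i c => c * skewN σ i a :=
  rfl

theorem skewEval_add (P Q : K[X]) (a : K) :
    skewEval σ (P + Q) a = skewEval σ P a + skewEval σ Q a := by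
  simp only [skewEval_eq_sum]
  exact sum_add_index _ _ _ (fun _ => zero_mul _) fun _ _ _ => add_mul _ _ _

theorem skewEval_monomial (n : ℕ) (c a : K) : skewEval σ (monomial n c) a = c * skewN σ n a := by
  simp only [skewEval_eq_sum]
  exact sum_monomial_index _ _ (zero_mul _)

theorem skewEval_zero_eq_coeff_zero (P : K[X]) : skewEval σ P 0 = P.coeff 0 := by
  rw [skewEval_eq_sum, Polynomial.sum_def, Finset.sum_eq_single 0]
  · simp [skewN]
  · rintro (_ | i) _ hi
    · exact absurd rfl hi
    · simp [skewN]
  · intro h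
    simp [notMem_support_iff.mp h]

theorem skewEval_quadratic (u v a : K) :
    skewEval σ (X ^ 2 + C u * X + C v) a = σ a * a + u * a + v := by
  rw [X_pow_eq_monomial, C_mul_X_eq_monomial, ← monomial_zero_left, skewEval_add, skewEval_add,
    skewEval_monomial, skewEval_monomial, skewEval_monomial]
  simp [skewN]

theorem skewN_sigma_mul_inv {x : K} (hx : x ≠ 0) (i : ℕ) :
    skewN σ i (σ x * x⁻¹) = σ^[i] x * x⁻¹ := by
  induction i with
  | zero => simp [skewN, hx]
  | succ i ih =>
    have hσx : σ x ≠ 0 := by simpa using hx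
    rw [skewN, ih, map_mul, map_inv₀, Function.iterate_succ_apply']
    field_simp

noncomputable def skewLinEval (P : K[X]) (x : K) : K :=
  ∑ i ∈ P.support, P.coeff i * σ^[i] x

theorem skewEval_sigma_mul_inv (P : K[X]) {x : K} (hx : x ≠ 0) :
    skewEval σ P (σ x * x⁻¹) = skewLinEval σ P x * x⁻¹ := by
  rw [skewEval, skewLinEval, Finset.sum_mul]
  exact Finset.sum_congr rfl fun i _ => by rw [skewN_sigma_mul_inv σ hx, mul_assoc]

theorem skewEval_sigma_mul_inv_eq_zero_iff (P : K[X]) {x : K} (hx : x ≠ 0) :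
    skewEval σ P (σ x * x⁻¹) = 0 ↔ skewLinEval σ P x = 0 := by
  simp [skewEval_sigma_mul_inv σ P hx, hx]

theorem skewLinEval_add_fixed_mul (P : K[X]) {c : K} (hc : σ c = c) (x y : K) :
    skewLinEval σ P (x + c * y) = skewLinEval σ P x + c * skewLinEval σ P y := by
  simp only [skewLinEval, Finset.mul_sum, ← Finset.sum_add_distrib, iterate_map_add,
    iterate_map_mul, Function.iterate_fixed hc]
  exact Finset.sum_congr rfl fun _ _ => by ring

theorem sigma_mul_inv_eq_iff {x y : K} (hx : x ≠ 0) (hy : y ≠ 0) :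
    σ x * x⁻¹ = σ y * y⁻¹ ↔ ∃ d, σ d = d ∧ x = d * y := by
  have hσy : σ y ≠ 0 := by simpa using hy
  constructor
  · intro h
    refine ⟨x * y⁻¹, ?_, by field_simp⟩
    rw [map_mul, map_inv₀]
    field_simp at h ⊢
    linear_combination h
  · rintro ⟨d, hd, rfl⟩
    have hd0 : d ≠ 0 := left_ne_zero_of_mul hx
    rw [map_mul, hd]
    field_simp

theorem three_le_one_add_mk_fixed :
    (3 : Cardinal) ≤ 1 + Cardinal.mk {c : K // σ c = c} := by
  have h2 : (2 : Cardinal) ≤ Cardinal.mk {c : K // σ c = c} :=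
    Cardinal.two_le_iff.mpr ⟨⟨0, map_zero σ⟩, ⟨1, map_one σ⟩, by simp⟩
  calc (3 : Cardinal) = 1 + 2 := by norm_num
    _ ≤ _ := add_le_add_right h2 1

def FixedLinIndep (x₁ x₂ : K) : Prop :=
  ∀ a b, σ a = a → σ b = b → a * x₁ + b * x₂ = 0 → a = 0 ∧ b = 0

theorem fixedLinIndep_of_sigma_mul_inv_ne {x₁ x₂ : K} (hx₁ : x₁ ≠ 0) (hx₂ : x₂ ≠ 0)
    (hne : σ x₁ * x₁⁻¹ ≠ σ x₂ * x₂⁻¹) : FixedLinIndep σ x₁ x₂ := by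
  intro a b ha hb h
  by_cases ha0 : a = 0
  · subst ha0
    exact ⟨rfl, by simpa [hx₂] using h⟩
  refine absurd ((sigma_mul_inv_eq_iff σ hx₁ hx₂).mpr ⟨-b / a, ?_, ?_⟩) hne
  · rw [map_div₀, map_neg, ha, hb]
  · field_simp
    linear_combination h

/-- `none` is the point at infinity of the projective line over the fixed field. -/
def projLinePoint (x₁ x₂ : K) : Option {c : K // σ c = c} → K
  | none => x₂
  | some c => x₁ + c * x₂

variable {σ}

theorem projLinePoint_ne_zero {x₁ x₂ : K} (hx₂ : x₂ ≠ 0)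
    (hindep : FixedLinIndep σ x₁ x₂) :
    ∀ o, projLinePoint σ x₁ x₂ o ≠ 0
  | none => hx₂
  | some c => fun h =>
    one_ne_zero (hindep 1 c (map_one σ) c.2 (by simpa [projLinePoint] using h)).1

theorem injective_sigma_mul_inv_projLinePoint {x₁ x₂ : K} (hx₂ : x₂ ≠ 0)
    (hindep : FixedLinIndep σ x₁ x₂) :
    Function.Injective fun o => σ (projLinePoint σ x₁ x₂ o) * (projLinePoint σ x₁ x₂ o)⁻¹ := by
  intro o o' h
  obtain ⟨d, hd, hdo⟩ := (sigma_mul_inv_eq_iff σ (projLinePoint_ne_zero hx₂ hindep o)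
    (projLinePoint_ne_zero hx₂ hindep o')).mp h
  rcases o with _ | ⟨c, hc⟩ <;> rcases o' with _ | ⟨c', hc'⟩ <;> simp only [projLinePoint] at hdo
  · rfl
  · have hd0 := (hindep (-d) (1 - d * c') (by rw [map_neg, hd])
      (by rw [map_sub, map_mul, hd, hc', map_one]) (by linear_combination hdo)).1
    exact absurd (by rw [hdo, neg_eq_zero.mp hd0, zero_mul]) hx₂
  · exact absurd (hindep 1 (c - d) (map_one σ) (by rw [map_sub, hc, hd])
      (by linear_combination hdo)).1 one_ne_zero
  · obtain ⟨hd1, hcc⟩ := hindep (1 - d) (c - d * c') (by rw [map_sub, map_one, hd])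
      (by rw [map_sub, map_mul, hc, hd, hc']) (by linear_combination hdo)
    obtain rfl : d = 1 := (sub_eq_zero.mp hd1).symm
    obtain rfl : c = c' := by simpa [sub_eq_zero] using hcc
    rfl

theorem one_add_mk_fixed_le_mk_roots
    (hconj : ∀ a : K, a ≠ 0 → ∃ x : K, x ≠ 0 ∧ a = σ x * x⁻¹) {P : K[X]} (h0 : P.coeff 0 ≠ 0)
    {r₁ r₂ : K} (hr₁ : skewEval σ P r₁ = 0) (hr₂ : skewEval σ P r₂ = 0) (hne : r₁ ≠ r₂) :
    1 + Cardinal.mk {c : K // σ c = c} ≤ Cardinal.mk {x : K // skewEval σ P x = 0} := by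
  have hroot_ne : ∀ r, skewEval σ P r = 0 → r ≠ 0 := fun r hr h =>
    h0 (by rwa [h, skewEval_zero_eq_coeff_zero] at hr)
  obtain ⟨x₁, hx₁, rfl⟩ := hconj r₁ (hroot_ne _ hr₁)
  obtain ⟨x₂, hx₂, rfl⟩ := hconj r₂ (hroot_ne _ hr₂)
  have hindep := fixedLinIndep_of_sigma_mul_inv_ne σ hx₁ hx₂ hne
  have hL₁ := (skewEval_sigma_mul_inv_eq_zero_iff σ P hx₁).mp hr₁
  have hL₂ := (skewEval_sigma_mul_inv_eq_zero_iff σ P hx₂).mp hr₂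
  have hroot : ∀ o, skewEval σ P
      (σ (projLinePoint σ x₁ x₂ o) * (projLinePoint σ x₁ x₂ o)⁻¹) = 0 := by
    rintro (_ | c)
    · exact hr₂
    · rw [skewEval_sigma_mul_inv_eq_zero_iff σ P (projLinePoint_ne_zero hx₂ hindep _),
        projLinePoint, skewLinEval_add_fixed_mul σ P c.2, hL₁, hL₂, mul_zero, add_zero]
  calc 1 + Cardinal.mk {c : K // σ c = c}
      = Cardinal.mk (Option {c : K // σ c = c}) := by rw [Cardinal.mk_option, add_comm]
    _ ≤ _ := Cardinal.mk_le_of_injective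
      (Subtype.coind_injective hroot (injective_sigma_mul_inv_projLinePoint hx₂ hindep))

theorem CAlgClosed.exists_root_ne_ne (h3 : CAlgClosed σ 3) {P : K[X]}
    (hdeg : 1 < P.natDegree) (h0 : P.coeff 0 ≠ 0) {r₁ r₂ : K} (hr₁ : skewEval σ P r₁ = 0)
    (hr₂ : skewEval σ P r₂ = 0) : ∃ c, skewEval σ P c = 0 ∧ c ≠ r₁ ∧ c ≠ r₂ := by
  obtain ⟨⟨c, hc⟩, hcl⟩ := Cardinal.exists_notMem_of_length_lt [⟨r₁, hr₁⟩, ⟨r₂, hr₂⟩]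
    (lt_of_lt_of_le (by norm_num) (h3 P hdeg h0))
  simp only [List.mem_cons, List.not_mem_nil, or_false, not_or, Subtype.mk.injEq] at hcl
  exact ⟨c, hc, hcl⟩

/-- In `K[T;σ]` write the quadratic as `(T - b)(T - c)`; any other root `r` makes `b` the
σ-conjugate `σ(r - c) r (r - c)⁻¹`, so the roots `1` and `a` are both σ-conjugate to `b`. -/
theorem sigma_mul_inv_eq_of_three_roots {u v a c : K}
    (h1 : skewEval σ (X ^ 2 + C u * X + C v) 1 = 0) (ha : skewEval σ (X ^ 2 + C u * X + C v) a = 0)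
    (hc : skewEval σ (X ^ 2 + C u * X + C v) c = 0) (hc1 : c ≠ 1) (hca : c ≠ a) :
    a = σ ((c - 1) / (c - a)) * ((c - 1) / (c - a))⁻¹ := by
  rw [skewEval_quadratic, map_one] at h1
  rw [skewEval_quadratic] at ha hc
  have hca' : c - a ≠ 0 := sub_ne_zero.mpr hca
  have hc1' : c - 1 ≠ 0 := sub_ne_zero.mpr hc1
  have hσca : σ c - σ a ≠ 0 := by rwa [← map_sub, _root_.map_ne_zero]
  rw [map_div₀, map_sub, map_sub, map_one, inv_div]
  field_simp
  linear_combination (c - a) * h1 + (1 - c) * ha - (1 - a) * hc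

theorem CAlgClosed.mono {c c' : Cardinal} (hc : c ≤ c') (h : CAlgClosed σ c') :
    CAlgClosed σ c :=
  fun P hdeg h0 => hc.trans (h P hdeg h0)

theorem CAlgClosed.exists_sigma_mul_inv_eq (h3 : CAlgClosed σ 3) (a : K) (ha : a ≠ 0) :
    ∃ x : K, x ≠ 0 ∧ a = σ x * x⁻¹ := by
  by_cases ha1 : a = 1
  · exact ⟨1, one_ne_zero, by simp [ha1]⟩
  by_cases hσa : σ a = 1
  · exact ⟨a⁻¹, inv_ne_zero ha, by rw [map_inv₀, hσa, inv_one, one_mul, inv_inv]⟩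
  have ha1' : a - 1 ≠ 0 := sub_ne_zero.mpr ha1
  set v := a * (σ a - 1) / (a - 1)
  have hv : v ≠ 0 := div_ne_zero (mul_ne_zero ha (sub_ne_zero.mpr hσa)) ha1'
  have hv_mul : v * (a - 1) = a * (σ a - 1) := div_mul_cancel₀ _ ha1'
  have hdeg : 1 < (X ^ 2 + C (-1 - v) * X + C v).natDegree := by
    rw [← one_mul (X ^ 2), ← C_1, natDegree_quadratic one_ne_zero]
    norm_num
  have hr₁ : skewEval σ (X ^ 2 + C (-1 - v) * X + C v) 1 = 0 := by
    rw [skewEval_quadratic, map_one]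
    ring
  have hr₂ : skewEval σ (X ^ 2 + C (-1 - v) * X + C v) a = 0 := by
    rw [skewEval_quadratic]
    linear_combination -hv_mul
  obtain ⟨c, hc, hc1, hca⟩ :=
    h3.exists_root_ne_ne hdeg (by simpa using hv) hr₁ hr₂
  exact ⟨_, div_ne_zero (sub_ne_zero.mpr hc1) (sub_ne_zero.mpr hca),
    sigma_mul_inv_eq_of_three_roots hr₁ hr₂ hc hc1 hca⟩

theorem CAlgClosed.one_add_mk_fixed (h2 : CAlgClosed σ 2)
    (hconj : ∀ a : K, a ≠ 0 → ∃ x : K, x ≠ 0 ∧ a = σ x * x⁻¹) :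
    CAlgClosed σ (1 + Cardinal.mk {c : K // σ c = c}) := by
  intro P hdeg h0
  obtain ⟨⟨r₁, hr₁⟩, ⟨r₂, hr₂⟩, hne⟩ := Cardinal.two_le_iff.mp (h2 P hdeg h0)
  exact one_add_mk_fixed_le_mk_roots hconj h0 hr₁ hr₂ fun h => hne (Subtype.ext h)


end

/-- For a 2-algebraically closed σ-field `(K, σ)` with fixed field `F`: it is
3-algebraically closed iff every nonzero element is σ-conjugate to `1` (i.e. `K` has exactly
two σ-conjugacy classes); moreover 3-algebraic closedness implies `(1+|F|)`-algebraic
closedness, and, if `F` is infinite, ℵ₀-algebraic closedness. -/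
theorem stmt_17 {K : Type u} [Field K] (σ : K →+* K)
    (h2 : CAlgClosed σ 2) :
    (CAlgClosed σ 3 ↔ ∀ a : K, a ≠ 0 → ∃ x : K, x ≠ 0 ∧ a = σ x * x⁻¹) ∧
    (CAlgClosed σ 3 → CAlgClosed σ (1 + Cardinal.mk {c : K // σ c = c})) ∧
    (CAlgClosed σ 3 → Infinite {c : K // σ c = c} → CAlgClosed σ Cardinal.aleph0) := by
  have hconj_closed := h2.one_add_mk_fixed
  refine ⟨⟨CAlgClosed.exists_sigma_mul_inv_eq,
      fun hconj => (hconj_closed hconj).mono (three_le_one_add_mk_fixed σ)⟩,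
    fun h3 => hconj_closed h3.exists_sigma_mul_inv_eq,
    fun h3 hinf => (hconj_closed h3.exists_sigma_mul_inv_eq).mono ?_⟩
  exact (Cardinal.infinite_iff.mp hinf).trans le_add_self
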